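/- arXiv:1706.08732 — 2 statements merged into one kernel-verified Lean document; each statement's English description precedes it below -/
import Mathlib

section
/- In the alternating block setting: let G := (ΣBBᵀΣ)† be the Moore–Penrose pseudoinverse of ΣBBᵀΣ. Then I_n − BᵀGB = Γ, i.e., I_n − Bᵀ(ΣBBᵀΣ)†B equals the block diagonal matrix Diag(Γ₁,…,Γ_N) with Γ_i = (1/(n_i+1))E_{n_i+1} if i ∈ J, Γ_i = I_{n_i} if i ∉ J and i ∈ {1, N}, and Γ_i = I_{n_i−1} if i ∉ J and 1 < i < N. -/
open Matrix

/-- `G` is the Moore–Penrose pseudoinverse of `M`. -/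
def IsMoorePenrose {k : ℕ} (M G : Matrix (Fin k) (Fin k) ℝ) : Prop :=
  M * G * M = M ∧ G * M * G = G ∧ (M * G)ᵀ = M * G ∧ (G * M)ᵀ = G * M

/-- Cumulative block sizes: `cumS nb j = n₁ + ⋯ + n_j` (`0`-indexed: sum of `nb t` for `t < j`). -/
def cumS {N : ℕ} (nb : Fin N → ℕ) (j : ℕ) : ℕ :=
  ∑ t : Fin N, if (t : ℕ) < j then nb t else 0

/-- The diagonal matrix `Σ = Diag(Λ₁,…,Λ_N)` with `Λ_i = I` for `i ∈ J` and `Λ_i = O` otherwise. -/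
noncomputable def SigmaMat {N : ℕ} (nn : ℕ) (nb : Fin N → ℕ) (J : Finset (Fin N)) :
    Matrix (Fin (nn - 1)) (Fin (nn - 1)) ℝ :=
  Matrix.diagonal fun i =>
    if ∃ j ∈ J, cumS nb (j : ℕ) ≤ (i : ℕ) ∧ (i : ℕ) < cumS nb ((j : ℕ) + 1) then (1 : ℝ) else 0

/-- The block diagonal matrix `Γ = Diag(Γ₁,…,Γ_N)` of Proposition 6, written entrywise:
on the (row/column) range `[cumS j, cumS (j+1)]` of a block `j ∈ J` it is the all-ones
block scaled by `1/(n_j+1)`; outside the `J`-ranges it is the identity. -/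
noncomputable def GammaMat {N : ℕ} (nn : ℕ) (nb : Fin N → ℕ) (J : Finset (Fin N)) :
    Matrix (Fin nn) (Fin nn) ℝ :=
  Matrix.of fun k l =>
    (if k = l ∧ ∀ j ∈ J, ¬(cumS nb (j : ℕ) ≤ (k : ℕ) ∧ (k : ℕ) ≤ cumS nb ((j : ℕ) + 1))
      then (1 : ℝ) else 0)
    + ∑ j ∈ J,
        if (cumS nb (j : ℕ) ≤ (k : ℕ) ∧ (k : ℕ) ≤ cumS nb ((j : ℕ) + 1)) ∧
           (cumS nb (j : ℕ) ≤ (l : ℕ) ∧ (l : ℕ) ≤ cumS nb ((j : ℕ) + 1))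
        then (1 : ℝ) / ((nb j : ℝ) + 1) else 0

lemma mp_unique {k : ℕ} {M G H : Matrix (Fin k) (Fin k) ℝ}
    (hg : IsMoorePenrose M G) (hh : IsMoorePenrose M H) : G = H := by
  obtain ⟨g1, g2, g3, g4⟩ := hg
  obtain ⟨h1, h2, h3, h4⟩ := hh
  have e1 : G = G * M * H := by
    calc G = G * M * G := g2.symm
    _ = G * (M * G)ᵀ := by rw [g3, mul_assoc]
    _ = G * (M * H * M * G)ᵀ := by rw [h1]
    _ = G * ((M * H) * (M * G))ᵀ := by simp only [mul_assoc]
    _ = G * ((M*G)ᵀ * (M*H)ᵀ) := by rw [transpose_mul]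
    _ = G * ((M*G) * (M*H)) := by rw [g3, h3]
    _ = (G * M * G) * (M * H) := by simp only [mul_assoc]
    _ = G * M * H := by rw [g2, ← mul_assoc]
  have e2 : H = G * M * H := by
    calc H = H * M * H := h2.symm
    _ = (H * M)ᵀ * H := by rw [h4]
    _ = (H * (M * G * M))ᵀ * H := by rw [g1]
    _ = ((H * M) * (G * M))ᵀ * H := by simp only [mul_assoc]
    _ = ((G*M)ᵀ * (H*M)ᵀ) * H := by rw [transpose_mul]
    _ = (G*M) * ((H*M) * H) := by rw [g4, h4, mul_assoc]
    _ = G * M * (H * M * H) := by simp only [mul_assoc]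
    _ = G * M * H := by rw [h2]
  rw [e1, ← e2]

lemma mp_transpose {k : ℕ} {M G : Matrix (Fin k) (Fin k) ℝ} (hM : Mᵀ = M)
    (hg : IsMoorePenrose M G) : Gᵀ = G := by
  obtain ⟨g1, g2, g3, g4⟩ := hg
  have hgt : IsMoorePenrose M Gᵀ := by
    refine ⟨?_, ?_, ?_, ?_⟩
    · calc M * Gᵀ * M = (Mᵀ * G * Mᵀ)ᵀ := by simp [transpose_mul, mul_assoc]
      _ = M := by rw [hM, g1, hM]
    · calc Gᵀ * M * Gᵀ = (Gᵀ * Mᵀ) * Gᵀ := by rw [hM]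
      _ = (G * M * G)ᵀ := by simp [transpose_mul, mul_assoc]
      _ = Gᵀ := by rw [g2]
    · have : M * Gᵀ = (G * Mᵀ)ᵀ := by simp [transpose_mul]
      rw [this, hM, g4, g4]
    · have : Gᵀ * M = (Mᵀ * G)ᵀ := by simp [transpose_mul]
      rw [this, hM, g3, g3]
  exact (mp_unique hgt ⟨g1,g2,g3,g4⟩)

lemma cumS_mono {N : ℕ} (nb : Fin N → ℕ) {a b : ℕ} (hab : a ≤ b) :
    cumS nb a ≤ cumS nb b :=
  Finset.sum_le_sum fun t _ => by split_ifs <;> omega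

lemma cumS_succ {N : ℕ} (nb : Fin N → ℕ) (j : Fin N) :
    cumS nb ((j : ℕ) + 1) = cumS nb j + nb j := by
  unfold cumS
  calc ∑ t : Fin N, (if (t:ℕ) < (j:ℕ)+1 then nb t else 0)
      = ∑ t : Fin N, ((if (t:ℕ) < (j:ℕ) then nb t else 0) +
          (if t = j then nb t else 0)) := by
        refine Finset.sum_congr rfl fun t _ => ?_
        rcases eq_or_ne t j with rfl | h
        · simp
        · have hv : (t:ℕ) ≠ (j:ℕ) := fun hh => h (Fin.val_injective hh)
          split_ifs <;> omega
    _ = cumS nb j + nb j := by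
        rw [Finset.sum_add_distrib, Finset.sum_ite_eq' Finset.univ j nb]
        simp [cumS]

lemma cumS_lt_succ {N : ℕ} (nb : Fin N → ℕ) (hnb : ∀ t, 1 ≤ nb t) (j : Fin N) :
    cumS nb j < cumS nb ((j : ℕ) + 1) := by
  rw [cumS_succ]; have := hnb j; omega

lemma cumS_top {N nn : ℕ} (nb : Fin N → ℕ) (hsum : (∑ t, nb t) = nn - 1) :
    cumS nb N = nn - 1 := by
  rw [← hsum]; exact Finset.sum_congr rfl fun t _ => by simp [t.isLt]

lemma cumS_le_top {N nn : ℕ} (nb : Fin N → ℕ) (hsum : (∑ t, nb t) = nn - 1)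
    {j : ℕ} (hj : j ≤ N) : cumS nb j ≤ nn - 1 :=
  (cumS_mono nb hj).trans (cumS_top nb hsum).le

lemma block_unique_aux {N : ℕ} {nb : Fin N → ℕ} (hnb : ∀ t, 1 ≤ nb t)
    {J : Finset (Fin N)}
    (halt : ∀ (i : Fin N) (h : (i : ℕ) + 1 < N), i ∈ J ↔ (⟨(i : ℕ) + 1, h⟩ : Fin N) ∉ J)
    {j₁ j₂ : Fin N} (h1 : j₁ ∈ J) (h2 : j₂ ∈ J) (hlt : (j₁ : ℕ) < (j₂ : ℕ)) {k : ℕ}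
    (hk1 : k ≤ cumS nb ((j₁ : ℕ) + 1)) (hk2 : cumS nb (j₂ : ℕ) ≤ k) : False := by
  rcases Nat.lt_or_ge ((j₁ : ℕ) + 1) (j₂ : ℕ) with h | h
  · have hlt2 : (j₁ : ℕ) + 1 < N := lt_trans h j₂.isLt
    have e1 : cumS nb ((j₁:ℕ)+1) < cumS nb ((j₁:ℕ)+1+1) :=
      cumS_lt_succ nb hnb ⟨(j₁:ℕ)+1, hlt2⟩
    have e2 : cumS nb ((j₁:ℕ)+1+1) ≤ cumS nb (j₂:ℕ) := cumS_mono nb (by omega)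
    omega
  · have hj : (j₂ : ℕ) = (j₁ : ℕ) + 1 := by omega
    have hlt2 : (j₁ : ℕ) + 1 < N := by rw [← hj]; exact j₂.isLt
    have := (halt j₁ hlt2).mp h1
    refine this ?_
    have : (⟨(j₁:ℕ)+1, hlt2⟩ : Fin N) = j₂ := Fin.val_injective (by simp [hj])
    rw [this]; exact h2

lemma block_unique {N : ℕ} {nb : Fin N → ℕ} (hnb : ∀ t, 1 ≤ nb t)
    {J : Finset (Fin N)}
    (halt : ∀ (i : Fin N) (h : (i : ℕ) + 1 < N), i ∈ J ↔ (⟨(i : ℕ) + 1, h⟩ : Fin N) ∉ J)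
    {j₁ j₂ : Fin N} (h1 : j₁ ∈ J) (h2 : j₂ ∈ J) {k : ℕ}
    (hk1 : cumS nb (j₁ : ℕ) ≤ k) (hk1' : k ≤ cumS nb ((j₁ : ℕ) + 1))
    (hk2 : cumS nb (j₂ : ℕ) ≤ k) (hk2' : k ≤ cumS nb ((j₂ : ℕ) + 1)) : j₁ = j₂ := by
  rcases lt_trichotomy (j₁ : ℕ) (j₂ : ℕ) with h | h | h
  · exact absurd (block_unique_aux hnb halt h1 h2 h hk1' hk2) (by simp)
  · exact Fin.ext h
  · exact absurd (block_unique_aux hnb halt h2 h1 h hk2' hk1) (by simp)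

noncomputable def Cmat {N : ℕ} (nn : ℕ) (nb : Fin N → ℕ) (J : Finset (Fin N)) :
    Matrix (Fin nn) (Fin (nn - 1)) ℝ :=
  Matrix.of fun k i => ∑ j ∈ J,
    if (cumS nb (j : ℕ) ≤ (k : ℕ) ∧ (k : ℕ) ≤ cumS nb ((j : ℕ) + 1)) ∧
       (cumS nb (j : ℕ) ≤ (i : ℕ) ∧ (i : ℕ) < cumS nb ((j : ℕ) + 1))
    then (if (k : ℕ) ≤ (i : ℕ) then (1 : ℝ) else 0)
      - (((i : ℕ) : ℝ) - ((cumS nb (j : ℕ) : ℕ) : ℝ) + 1) / ((nb j : ℝ) + 1)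
    else 0

section Entry
variable {nn N : ℕ} (hnn : 2 ≤ nn) {nb : Fin N → ℕ} {J : Finset (Fin N)}

lemma rowB_sum {B : Matrix (Fin (nn - 1)) (Fin nn) ℝ}
    (hB : ∀ (i : Fin (nn - 1)) (l : Fin nn),
      B i l = if (l : ℕ) = (i : ℕ) then 1 else if (l : ℕ) = (i : ℕ) + 1 then -1 else 0)
    (i : Fin (nn - 1)) (f : Fin nn → ℝ) (h1 : (i : ℕ) < nn) (h2 : (i : ℕ) + 1 < nn) :
    ∑ m, B i m * f m = f ⟨(i : ℕ), h1⟩ - f ⟨(i : ℕ) + 1, h2⟩ := by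
  have hc : ∀ m : Fin nn, B i m * f m =
      (if m = (⟨(i : ℕ), h1⟩ : Fin nn) then f m else 0)
      + (if m = (⟨(i : ℕ) + 1, h2⟩ : Fin nn) then -f m else 0) := by
    intro m
    rw [hB]
    simp only [Fin.ext_iff]
    split_ifs <;> first | (exfalso; omega) | ring
  rw [Finset.sum_congr rfl fun m _ => hc m, Finset.sum_add_distrib,
    Finset.sum_ite_eq' Finset.univ, Finset.sum_ite_eq' Finset.univ]
  simp [sub_eq_add_neg]

lemma colB_sum {B : Matrix (Fin (nn - 1)) (Fin nn) ℝ}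
    (hB : ∀ (i : Fin (nn - 1)) (l : Fin nn),
      B i l = if (l : ℕ) = (i : ℕ) then 1 else if (l : ℕ) = (i : ℕ) + 1 then -1 else 0)
    (l : Fin nn) (g : Fin (nn - 1) → ℝ) :
    ∑ i, g i * B i l = (if h : (l : ℕ) < nn - 1 then g ⟨(l : ℕ), h⟩ else 0)
      - (if h : 0 < (l : ℕ) then g ⟨(l : ℕ) - 1, by have := l.isLt; omega⟩ else 0) := by
  have hc : ∀ i : Fin (nn - 1), g i * B i l =
      (if (i : ℕ) = (l : ℕ) then g i else 0)
      + (if (i : ℕ) + 1 = (l : ℕ) then -g i else 0) := by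
    intro i
    rw [hB]
    split_ifs <;> first | (exfalso; omega) | ring
  rw [Finset.sum_congr rfl fun i _ => hc i, Finset.sum_add_distrib]
  congr 1
  · split_ifs with h
    · rw [Finset.sum_eq_single (⟨(l : ℕ), h⟩ : Fin (nn - 1))]
      · simp
      · intro b _ hb
        exact if_neg fun hv => hb (Fin.val_injective hv)
      · simp
    · exact Finset.sum_eq_zero fun i _ => if_neg fun hv => h (by have := i.isLt; omega)
  · have e : ∀ x : Fin (nn - 1), (if (x : ℕ) + 1 = (l : ℕ) then -g x else 0)
        = -(if (x : ℕ) + 1 = (l : ℕ) then g x else 0) := fun x => by split_ifs <;> simp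
    rw [Finset.sum_congr rfl fun x _ => e x, Finset.sum_neg_distrib, neg_inj]
    split_ifs with h
    · rw [Finset.sum_eq_single (⟨(l : ℕ) - 1, by have := l.isLt; omega⟩ : Fin (nn - 1))]
      · exact if_pos (by simp; omega)
      · intro b _ hb
        exact if_neg fun hv => hb (Fin.val_injective (by simp; omega))
      · simp
    · exact Finset.sum_eq_zero fun x _ => if_neg (by omega)

lemma gamma_apply_in (hnb : ∀ t, 1 ≤ nb t)
    (halt : ∀ (i : Fin N) (h : (i : ℕ) + 1 < N), i ∈ J ↔ (⟨(i : ℕ) + 1, h⟩ : Fin N) ∉ J)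
    {j : Fin N} (hjJ : j ∈ J) {k : Fin nn} (l : Fin nn)
    (hk1 : cumS nb (j : ℕ) ≤ (k : ℕ)) (hk2 : (k : ℕ) ≤ cumS nb ((j : ℕ) + 1)) :
    GammaMat nn nb J k l =
      if cumS nb (j : ℕ) ≤ (l : ℕ) ∧ (l : ℕ) ≤ cumS nb ((j : ℕ) + 1)
      then (1 : ℝ) / ((nb j : ℝ) + 1) else 0 := by
  unfold GammaMat
  rw [Matrix.of_apply]
  rw [if_neg (fun h => h.2 j hjJ ⟨hk1, hk2⟩)]
  rw [Finset.sum_eq_single_of_mem j hjJ (fun b hb hne =>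
    if_neg fun hcond => hne (block_unique hnb halt hb hjJ hcond.1.1 hcond.1.2 hk1 hk2))]
  rw [zero_add, if_congr (and_iff_right ⟨hk1, hk2⟩) rfl rfl]

lemma gamma_apply_out {k : Fin nn} (l : Fin nn)
    (hk : ∀ j ∈ J, ¬(cumS nb (j : ℕ) ≤ (k : ℕ) ∧ (k : ℕ) ≤ cumS nb ((j : ℕ) + 1))) :
    GammaMat nn nb J k l = if k = l then (1 : ℝ) else 0 := by
  unfold GammaMat
  rw [Matrix.of_apply]
  rw [Finset.sum_eq_zero fun j hj => if_neg fun hc => hk j hj hc.1, add_zero,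
    if_congr (and_iff_left hk) rfl rfl]

lemma gamma_symm : (GammaMat nn nb J)ᵀ = GammaMat nn nb J := by
  ext k l
  show GammaMat nn nb J l k = GammaMat nn nb J k l
  unfold GammaMat
  rw [Matrix.of_apply, Matrix.of_apply]
  congr 1
  · refine if_congr ?_ rfl rfl
    constructor
    · rintro ⟨rfl, h⟩; exact ⟨rfl, h⟩
    · rintro ⟨rfl, h⟩; exact ⟨rfl, h⟩
  · exact Finset.sum_congr rfl fun j _ => if_congr and_comm rfl rfl

lemma cmat_apply_in (hnb : ∀ t, 1 ≤ nb t)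
    (halt : ∀ (i : Fin N) (h : (i : ℕ) + 1 < N), i ∈ J ↔ (⟨(i : ℕ) + 1, h⟩ : Fin N) ∉ J)
    {j : Fin N} (hjJ : j ∈ J) {k : Fin nn} (i : Fin (nn - 1))
    (hk1 : cumS nb (j : ℕ) ≤ (k : ℕ)) (hk2 : (k : ℕ) ≤ cumS nb ((j : ℕ) + 1)) :
    Cmat nn nb J k i =
      if cumS nb (j : ℕ) ≤ (i : ℕ) ∧ (i : ℕ) < cumS nb ((j : ℕ) + 1)
      then (if (k : ℕ) ≤ (i : ℕ) then (1 : ℝ) else 0)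
        - (((i : ℕ) : ℝ) - ((cumS nb (j : ℕ) : ℕ) : ℝ) + 1) / ((nb j : ℝ) + 1)
      else 0 := by
  unfold Cmat
  rw [Matrix.of_apply]
  rw [Finset.sum_eq_single_of_mem j hjJ (fun b hb hne =>
    if_neg fun hcond => hne (block_unique hnb halt hb hjJ hcond.1.1 hcond.1.2 hk1 hk2))]
  rw [if_congr (and_iff_right ⟨hk1, hk2⟩) rfl rfl]

lemma cmat_apply_out {k : Fin nn} (i : Fin (nn - 1))
    (hk : ∀ j ∈ J, ¬(cumS nb (j : ℕ) ≤ (k : ℕ) ∧ (k : ℕ) ≤ cumS nb ((j : ℕ) + 1))) :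
    Cmat nn nb J k i = 0 := by
  unfold Cmat
  rw [Matrix.of_apply]
  exact Finset.sum_eq_zero fun j hj => if_neg fun hc => hk j hj hc.1

lemma cmat_sigma (k : Fin nn) (i : Fin (nn - 1)) :
    Cmat nn nb J k i *
      (if ∃ j ∈ J, cumS nb (j : ℕ) ≤ (i : ℕ) ∧ (i : ℕ) < cumS nb ((j : ℕ) + 1) then (1 : ℝ) else 0)
      = Cmat nn nb J k i := by
  by_cases hi : ∃ j ∈ J, cumS nb (j : ℕ) ≤ (i : ℕ) ∧ (i : ℕ) < cumS nb ((j : ℕ) + 1)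
  · rw [if_pos hi, mul_one]
  · rw [if_neg hi, mul_zero]
    refine (Finset.sum_eq_zero fun j hj => if_neg fun hc => hi ⟨j, hj, hc.2⟩).symm

end Entry

section Main
variable {nn N : ℕ} {nb : Fin N → ℕ} {J : Finset (Fin N)}
  {B : Matrix (Fin (nn - 1)) (Fin nn) ℝ}

lemma A_gamma (hnn : 2 ≤ nn) (hnb : ∀ t, 1 ≤ nb t)
    (halt : ∀ (i : Fin N) (h : (i : ℕ) + 1 < N), i ∈ J ↔ (⟨(i : ℕ) + 1, h⟩ : Fin N) ∉ J)
    (hB : ∀ (i : Fin (nn - 1)) (l : Fin nn),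
      B i l = if (l : ℕ) = (i : ℕ) then 1 else if (l : ℕ) = (i : ℕ) + 1 then -1 else 0) :
    SigmaMat nn nb J * B * GammaMat nn nb J = 0 := by
  ext i l
  rw [Matrix.mul_apply, Matrix.zero_apply]
  have hd : ∀ m, (SigmaMat nn nb J * B) i m =
      (if ∃ j ∈ J, cumS nb (j : ℕ) ≤ (i : ℕ) ∧ (i : ℕ) < cumS nb ((j : ℕ) + 1)
        then (1 : ℝ) else 0) * B i m := fun m => by
    rw [SigmaMat, Matrix.diagonal_mul]
  simp only [hd]
  by_cases hi : ∃ j ∈ J, cumS nb (j : ℕ) ≤ (i : ℕ) ∧ (i : ℕ) < cumS nb ((j : ℕ) + 1)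
  · simp only [if_pos hi, one_mul]
    obtain ⟨j, hjJ, hi1, hi2⟩ := hi
    have h1 : (i : ℕ) < nn := by have := i.isLt; omega
    have h2 : (i : ℕ) + 1 < nn := by have := i.isLt; omega
    rw [rowB_sum hB i (fun m => GammaMat nn nb J m l) h1 h2]
    rw [gamma_apply_in hnb halt hjJ l (k := ⟨(i : ℕ), h1⟩) hi1 (le_of_lt hi2),
      gamma_apply_in hnb halt hjJ l (k := ⟨(i : ℕ) + 1, h2⟩) (show cumS nb (j : ℕ) ≤ (i : ℕ) + 1 by omega) hi2, sub_self]
  · simp only [if_neg hi, zero_mul]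
    simp

lemma one_sub_gamma (hnn : 2 ≤ nn) (hnb : ∀ t, 1 ≤ nb t) (hsum : (∑ t, nb t) = nn - 1)
    (halt : ∀ (i : Fin N) (h : (i : ℕ) + 1 < N), i ∈ J ↔ (⟨(i : ℕ) + 1, h⟩ : Fin N) ∉ J)
    (hB : ∀ (i : Fin (nn - 1)) (l : Fin nn),
      B i l = if (l : ℕ) = (i : ℕ) then 1 else if (l : ℕ) = (i : ℕ) + 1 then -1 else 0) :
    (1 : Matrix (Fin nn) (Fin nn) ℝ) - GammaMat nn nb J
      = Cmat nn nb J * (SigmaMat nn nb J * B) := by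
  ext k l
  rw [Matrix.sub_apply, Matrix.one_apply, Matrix.mul_apply]
  have hterm : ∀ i, Cmat nn nb J k i * (SigmaMat nn nb J * B) i l
      = Cmat nn nb J k i * B i l := fun i => by
    rw [SigmaMat, Matrix.diagonal_mul, ← mul_assoc, cmat_sigma]
  rw [Finset.sum_congr rfl fun i _ => hterm i, colB_sum hnn hB l (fun i => Cmat nn nb J k i)]
  by_cases hk : ∃ j ∈ J, cumS nb (j : ℕ) ≤ (k : ℕ) ∧ (k : ℕ) ≤ cumS nb ((j : ℕ) + 1)
  · obtain ⟨j, hjJ, hk1, hk2⟩ := hk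
    have hstep : cumS nb ((j : ℕ) + 1) = cumS nb (j : ℕ) + nb j := cumS_succ nb j
    set a := cumS nb (j : ℕ) with ha
    set m := nb j with hm
    have hm1 : 1 ≤ m := hnb j
    have htop : a + m ≤ nn - 1 := by
      rw [← hstep]; exact cumS_le_top nb hsum (by exact_mod_cast j.isLt)
    have hCi : ∀ i : Fin (nn - 1), Cmat nn nb J k i =
        if a ≤ (i : ℕ) ∧ (i : ℕ) < a + m
        then (if (k : ℕ) ≤ (i : ℕ) then (1 : ℝ) else 0)
          - (((i : ℕ) : ℝ) - (a : ℝ) + 1) / ((m : ℝ) + 1)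
        else 0 := fun i => by
      rw [cmat_apply_in hnb halt hjJ i hk1 hk2, hstep]
    rw [gamma_apply_in hnb halt hjJ l hk1 hk2, hstep]
    simp only [hCi, ← hm]
    have hK2 : (k : ℕ) ≤ a + m := hstep ▸ hk2
    have hL : (l : ℕ) < nn := l.isLt
    have hmR : ((m : ℝ) + 1) ≠ 0 := by positivity
    simp only [Fin.ext_iff]
    by_cases hc1 : (l : ℕ) < a
    · rw [if_neg (by omega), if_neg (by omega)]
      have e1 : (if h : (l : ℕ) < nn - 1 then
          (if a ≤ (l : ℕ) ∧ (l : ℕ) < a + m then (if (k : ℕ) ≤ (l : ℕ) then (1 : ℝ) else 0)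
            - (((l : ℕ) : ℝ) - (a : ℝ) + 1) / ((m : ℝ) + 1) else 0) else 0) = 0 := by
        split_ifs <;> first | rfl | (exfalso; omega)
      have e2 : (if h : 0 < (l : ℕ) then
          (if a ≤ (l : ℕ) - 1 ∧ (l : ℕ) - 1 < a + m then (if (k : ℕ) ≤ (l : ℕ) - 1 then (1 : ℝ) else 0)
            - ((((l : ℕ) - 1 : ℕ) : ℝ) - (a : ℝ) + 1) / ((m : ℝ) + 1) else 0) else 0) = 0 := by
        split_ifs <;> first | rfl | (exfalso; omega)
      rw [e1, e2]
    · by_cases hc2 : (l : ℕ) = a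
      · have hl1 : (l : ℕ) < nn - 1 := by omega
        rw [dif_pos hl1, if_pos (show a ≤ (l : ℕ) ∧ (l : ℕ) < a + m by omega),
          if_pos (show a ≤ (l : ℕ) ∧ (l : ℕ) ≤ a + m by omega)]
        have e2 : (if h : 0 < (l : ℕ) then
            (if a ≤ (l : ℕ) - 1 ∧ (l : ℕ) - 1 < a + m then (if (k : ℕ) ≤ (l : ℕ) - 1 then (1 : ℝ) else 0)
              - ((((l : ℕ) - 1 : ℕ) : ℝ) - (a : ℝ) + 1) / ((m : ℝ) + 1) else 0) else 0) = 0 := by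
          split_ifs <;> first | rfl | (exfalso; omega)
        rw [e2, sub_zero, hc2]
        have hca : ((a : ℕ) : ℝ) - (a : ℝ) + 1 = 1 := by ring
        rw [hca]
        split_ifs <;> first | (exfalso; omega) | ring
      · by_cases hc3 : (l : ℕ) < a + m
        · have hl1 : (l : ℕ) < nn - 1 := by omega
          have hl0 : 0 < (l : ℕ) := by omega
          rw [dif_pos hl1, dif_pos hl0,
            if_pos (show a ≤ (l : ℕ) ∧ (l : ℕ) < a + m by omega),
            if_pos (show a ≤ (l : ℕ) - 1 ∧ (l : ℕ) - 1 < a + m by omega),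
            if_pos (show a ≤ (l : ℕ) ∧ (l : ℕ) ≤ a + m by omega)]
          have hcast : (((l : ℕ) - 1 : ℕ) : ℝ) = ((l : ℕ) : ℝ) - 1 := by
            rw [Nat.cast_sub (by omega)]; norm_num
          rw [hcast]
          split_ifs <;> first | (exfalso; omega) | ring
        · by_cases hc4 : (l : ℕ) = a + m
          · have hl0 : 0 < (l : ℕ) := by omega
            have e1 : (if h : (l : ℕ) < nn - 1 then
                (if a ≤ (l : ℕ) ∧ (l : ℕ) < a + m then (if (k : ℕ) ≤ (l : ℕ) then (1 : ℝ) else 0)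
                  - (((l : ℕ) : ℝ) - (a : ℝ) + 1) / ((m : ℝ) + 1) else 0) else 0) = 0 := by
              split_ifs <;> first | rfl | (exfalso; omega)
            rw [e1, dif_pos hl0,
              if_pos (show a ≤ (l : ℕ) - 1 ∧ (l : ℕ) - 1 < a + m by omega),
              if_pos (show a ≤ (l : ℕ) ∧ (l : ℕ) ≤ a + m by omega)]
            have hcast : (((l : ℕ) - 1 : ℕ) : ℝ) - (a : ℝ) + 1 = (m : ℝ) := by
              rw [Nat.cast_sub (by omega), hc4]
              push_cast
              ring
            rw [hcast]
            split_ifs <;> first | (exfalso; omega) | (field_simp; done) | (field_simp; ring)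
          · have e1 : (if h : (l : ℕ) < nn - 1 then
                (if a ≤ (l : ℕ) ∧ (l : ℕ) < a + m then (if (k : ℕ) ≤ (l : ℕ) then (1 : ℝ) else 0)
                  - (((l : ℕ) : ℝ) - (a : ℝ) + 1) / ((m : ℝ) + 1) else 0) else 0) = 0 := by
              split_ifs <;> first | rfl | (exfalso; omega)
            have e2 : (if h : 0 < (l : ℕ) then
                (if a ≤ (l : ℕ) - 1 ∧ (l : ℕ) - 1 < a + m then (if (k : ℕ) ≤ (l : ℕ) - 1 then (1 : ℝ) else 0)
                  - ((((l : ℕ) - 1 : ℕ) : ℝ) - (a : ℝ) + 1) / ((m : ℝ) + 1) else 0) else 0) = 0 := by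
              split_ifs <;> first | rfl | (exfalso; omega)
            rw [e1, e2, if_neg (by omega), if_neg (by omega)]
  · have hk' : ∀ j ∈ J, ¬(cumS nb (j : ℕ) ≤ (k : ℕ) ∧ (k : ℕ) ≤ cumS nb ((j : ℕ) + 1)) :=
      fun j hj hc => hk ⟨j, hj, hc⟩
    rw [gamma_apply_out l hk']
    have hC : ∀ i : Fin (nn - 1), Cmat nn nb J k i = 0 := fun i => cmat_apply_out i hk'
    simp [hC]
end Main

lemma mul_transpose_self_eq_zero' {p q : ℕ} {X : Matrix (Fin p) (Fin q) ℝ}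
    (h : X * Xᵀ = 0) : X = 0 := by
  ext i j
  have hi := congrFun (congrFun h i) i
  rw [Matrix.mul_apply, Matrix.zero_apply] at hi
  rw [show ∑ c, X i c * Xᵀ c i = ∑ c, (X i c) ^ 2 from
    Finset.sum_congr rfl fun c _ => by rw [Matrix.transpose_apply, sq]] at hi
  have h0 := (Finset.sum_eq_zero_iff_of_nonneg fun c _ => sq_nonneg (X i c)).mp hi
    j (Finset.mem_univ j)
  simpa using sq_eq_zero_iff.mp h0

/-- **Proposition 6 (first assertion).** In the alternating block setting,
`I_n − Bᵀ (Σ B Bᵀ Σ)† B = Γ`. -/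
theorem gamma_formula {nn N : ℕ} (hnn : 2 ≤ nn) (hN : 1 ≤ N)
    (nb : Fin N → ℕ) (hnb : ∀ t, 1 ≤ nb t) (hsum : (∑ t, nb t) = nn - 1)
    (J : Finset (Fin N)) (hJne : J.Nonempty)
    (halt : ∀ (i : Fin N) (h : (i : ℕ) + 1 < N), i ∈ J ↔ (⟨(i : ℕ) + 1, h⟩ : Fin N) ∉ J)
    (B : Matrix (Fin (nn - 1)) (Fin nn) ℝ)
    (hB : ∀ (i : Fin (nn - 1)) (l : Fin nn),
      B i l = if (l : ℕ) = (i : ℕ) then 1 else if (l : ℕ) = (i : ℕ) + 1 then -1 else 0)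
    (G : Matrix (Fin (nn - 1)) (Fin (nn - 1)) ℝ)
    (hG : IsMoorePenrose (SigmaMat nn nb J * (B * Bᵀ) * SigmaMat nn nb J) G) :
    (1 : Matrix (Fin nn) (Fin nn) ℝ) - Bᵀ * G * B = GammaMat nn nb J := by
  set Sg := SigmaMat nn nb J with hSg
  set M := Sg * (B * Bᵀ) * Sg with hM
  have hSgt : Sgᵀ = Sg := by rw [hSg]; unfold SigmaMat; rw [Matrix.diagonal_transpose]
  have hSgSg : Sg * Sg = Sg := by
    rw [hSg]; unfold SigmaMat; rw [Matrix.diagonal_mul_diagonal]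
    exact congrArg Matrix.diagonal (funext fun i => by split_ifs <;> ring)
  have hMt : Mᵀ = M := by
    rw [hM]
    simp only [Matrix.transpose_mul, Matrix.transpose_transpose, hSgt, mul_assoc]
  have hGt : Gᵀ = G := mp_transpose hMt hG
  obtain ⟨g1, g2, g3, g4⟩ := hG
  have hSgM : Sg * M = M := by
    rw [hM, ← mul_assoc, ← mul_assoc, hSgSg]
  have hMSg : M * Sg = M := by rw [hM, mul_assoc, hSgSg]
  have hcomm : M * G = G * M := by
    rw [← g3, Matrix.transpose_mul, hGt, hMt]
  have hGexp : G = M * (G * G) := by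
    calc G = G * M * G := g2.symm
    _ = (M * G) * G := by rw [← hcomm]
    _ = M * (G * G) := by rw [mul_assoc]
  have hGexp2 : G = (G * G) * M := by
    calc G = G * M * G := g2.symm
    _ = G * (M * G) := by rw [mul_assoc]
    _ = G * (G * M) := by rw [hcomm]
    _ = (G * G) * M := by rw [← mul_assoc]
  have hSgG : Sg * G = G := by
    calc Sg * G = Sg * (M * (G * G)) := by rw [← hGexp]
    _ = (Sg * M) * (G * G) := by rw [← mul_assoc]
    _ = M * (G * G) := by rw [hSgM]
    _ = G := hGexp.symm
  have hGSg : G * Sg = G := by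
    calc G * Sg = ((G * G) * M) * Sg := by rw [← hGexp2]
    _ = (G * G) * (M * Sg) := by rw [mul_assoc]
    _ = (G * G) * M := by rw [hMSg]
    _ = G := hGexp2.symm
  set A := Sg * B with hA
  have hAAt : A * Aᵀ = M := by
    rw [hA, hM, Matrix.transpose_mul, hSgt]
    simp only [Matrix.mul_assoc]
  have hSGS : Sg * G * Sg = G := by rw [hSgG, hGSg]
  have hBtGB : Bᵀ * G * B = Aᵀ * G * A := by
    calc Bᵀ * G * B = Bᵀ * (Sg * G * Sg) * B := by rw [hSGS]
    _ = (Sg * B)ᵀ * G * (Sg * B) := by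
          rw [Matrix.transpose_mul, hSgt]; simp only [Matrix.mul_assoc]
    _ = Aᵀ * G * A := by rw [← hA]
  have key : M * G * A * Aᵀ = M := by
    rw [Matrix.mul_assoc (M * G) A Aᵀ, hAAt, g1]
  have hNNt : (M * G * A - A) * (M * G * A - A)ᵀ = 0 := by
    have ht : (M * G * A - A)ᵀ = Aᵀ * G * M - Aᵀ := by
      simp only [Matrix.transpose_sub, Matrix.transpose_mul, hGt, hMt, ← Matrix.mul_assoc]
    rw [ht, Matrix.mul_sub, Matrix.sub_mul, Matrix.sub_mul]
    have e1 : M * G * A * (Aᵀ * G * M) = M := by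
      calc M * G * A * (Aᵀ * G * M) = M * G * A * Aᵀ * (G * M) := by
            simp only [Matrix.mul_assoc]
      _ = M * (G * M) := by rw [key]
      _ = M := by rw [← Matrix.mul_assoc]; exact g1
    have e2 : A * (Aᵀ * G * M) = M := by
      calc A * (Aᵀ * G * M) = A * Aᵀ * (G * M) := by simp only [Matrix.mul_assoc]
      _ = M * (G * M) := by rw [hAAt]
      _ = M := by rw [← Matrix.mul_assoc]; exact g1
    rw [e1, e2, key, hAAt, sub_self]
  have hMGA : M * G * A = A := by
    have := mul_transpose_self_eq_zero' hNNt
    exact sub_eq_zero.mp this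
  have hAQ : A * (Aᵀ * G * A) = A := by
    calc A * (Aᵀ * G * A) = A * Aᵀ * (G * A) := by simp only [Matrix.mul_assoc]
    _ = M * (G * A) := by rw [hAAt]
    _ = A := by rw [← Matrix.mul_assoc]; exact hMGA
  have hAP : A * GammaMat nn nb J = 0 := A_gamma hnn hnb halt hB
  have hCA : (1 : Matrix (Fin nn) (Fin nn) ℝ) - GammaMat nn nb J
      = Cmat nn nb J * A := one_sub_gamma hnn hnb hsum halt hB
  have hQP : (Aᵀ * G * A) * GammaMat nn nb J = 0 := by
    rw [Matrix.mul_assoc, hAP, Matrix.mul_zero]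
  have h1 : (1 - Aᵀ * G * A) * GammaMat nn nb J = GammaMat nn nb J := by
    rw [Matrix.sub_mul, Matrix.one_mul, hQP, sub_zero]
  have h2 : ((1 : Matrix (Fin nn) (Fin nn) ℝ) - GammaMat nn nb J) * (1 - Aᵀ * G * A) = 0 := by
    have hz : A * (1 - Aᵀ * G * A) = 0 := by
      rw [Matrix.mul_sub, Matrix.mul_one, hAQ, sub_self]
    rw [hCA, Matrix.mul_assoc, hz, Matrix.mul_zero]
  have h3 : (1 - Aᵀ * G * A) = GammaMat nn nb J * (1 - Aᵀ * G * A) := by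
    rw [Matrix.sub_mul, Matrix.one_mul] at h2
    exact sub_eq_zero.mp h2
  have hP't : ((1 : Matrix (Fin nn) (Fin nn) ℝ) - Aᵀ * G * A)ᵀ = 1 - Aᵀ * G * A := by
    simp only [Matrix.transpose_sub, Matrix.transpose_one, Matrix.transpose_mul,
      Matrix.transpose_transpose, hGt, ← Matrix.mul_assoc]
  rw [hBtGB]
  calc (1 : Matrix (Fin nn) (Fin nn) ℝ) - Aᵀ * G * A = (1 - Aᵀ * G * A)ᵀ := hP't.symm
  _ = (GammaMat nn nb J * (1 - Aᵀ * G * A))ᵀ := by rw [← h3]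
  _ = (1 - Aᵀ * G * A)ᵀ * (GammaMat nn nb J)ᵀ := by rw [Matrix.transpose_mul]
  _ = (1 - Aᵀ * G * A) * GammaMat nn nb J := by rw [hP't, gamma_symm]
  _ = GammaMat nn nb J := h1
end

section
/- Let n ≥ 2, λ₂ ≥ 0 and v ∈ ℝ^n. Then there exists a neighborhood W of v such that for all w ∈ W the following hold: (i) {i : |(z_{λ₂}(Bw))_i| = λ₂} ⊆ {i : |(z_{λ₂}(Bv))_i| = λ₂} and supp(B x_{λ₂}(v)) ⊆ supp(B x_{λ₂}(w)); (ii) for every index set K with supp(B x_{λ₂}(w)) ⊆ K ⊆ {i : |(z_{λ₂}(Bw))_i| = λ₂}, setting Σ_K := Diag(σ_K) with (σ_K)_i = 0 if i ∈ K and (σ_K)_i = 1 otherwise, and G_K := (Σ_K B Bᵀ Σ_K)†, one has z_{λ₂}(Bw) = z_{λ₂}(Bv) + G_K B(w − v) and x_{λ₂}(w) = x_{λ₂}(v) + (I_n − Bᵀ G_K B)(w − v). -/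
open Matrix

noncomputable def l2norm {m : ℕ} (v : Fin m → ℝ) : ℝ := Real.sqrt (∑ i, (v i) ^ 2)

def dot {m : ℕ} (u v : Fin m → ℝ) : ℝ := ∑ i, u i * v i

set_option linter.unusedSectionVars false
set_option maxHeartbeats 1000000

lemma dot_eq {m : ℕ} (u v : Fin m → ℝ) : dot u v = u ⬝ᵥ v := rfl

lemma l2sq {m : ℕ} (v : Fin m → ℝ) : (l2norm v)^2 = ∑ i, (v i)^2 := by
  rw [l2norm, Real.sq_sqrt]
  positivity

lemma l2_nonneg {m : ℕ} (v : Fin m → ℝ) : 0 ≤ l2norm v := Real.sqrt_nonneg _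

lemma abs_le_l2norm {m : ℕ} (v : Fin m → ℝ) (i : Fin m) : |v i| ≤ l2norm v := by
  rw [← Real.sqrt_sq_eq_abs, l2norm]
  apply Real.sqrt_le_sqrt
  exact Finset.single_le_sum (f := fun j => (v j)^2) (fun j _ => by positivity) (Finset.mem_univ i)

lemma lin_pos {g c : ℝ} (h : ∀ t : ℝ, 0 < t → t ≤ 1 → 0 ≤ t * g + t^2 * c) : 0 ≤ g := by
  by_contra hg
  push_neg at hg
  set t := min 1 ((-g)/(2*(|c|+1))) with ht
  have habs : 0 ≤ |c| := abs_nonneg c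
  have h1 : 0 < t := lt_min one_pos (div_pos (by linarith) (by positivity))
  have h2 : t ≤ 1 := min_le_left _ _
  have h3 : t ≤ (-g)/(2*(|c|+1)) := min_le_right _ _
  have h4 : t * (2*(|c|+1)) ≤ -g := by
    rw [← le_div_iff₀ (by positivity)]; exact h3
  have h5 := h t h1 h2
  have hc : c ≤ |c| := le_abs_self c
  nlinarith [mul_pos h1 h1, mul_le_mul_of_nonneg_left hc (le_of_lt (mul_pos h1 h1)),
    mul_le_mul_of_nonneg_left h4 h1.le]


section
variable {n : ℕ} (lam2 : ℝ) (hlam2 : 0 ≤ lam2) (B : Matrix (Fin (n - 1)) (Fin n) ℝ)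
  (zfun : (Fin (n - 1) → ℝ) → (Fin (n - 1) → ℝ))
  (hzfeas : ∀ u i, |zfun u i| ≤ lam2)
  (hzmin : ∀ (u : Fin (n - 1) → ℝ) (z : Fin (n - 1) → ℝ), (∀ i, |z i| ≤ lam2) →
      (1/2) * (l2norm (Bᵀ.mulVec (zfun u)))^2 - dot (zfun u) u ≤
      (1/2) * (l2norm (Bᵀ.mulVec z))^2 - dot z u)

-- helper: linearity of mulVec on pointwise affine combination
lemma mulVec_affine {k m : ℕ} (A : Matrix (Fin k) (Fin m) ℝ) (z0 d : Fin m → ℝ) (t : ℝ) :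
    A.mulVec (fun j => z0 j + t * d j) = fun l => A.mulVec z0 l + t * A.mulVec d l := by
  funext l
  simp only [Matrix.mulVec, dotProduct, mul_add, Finset.sum_add_distrib, Finset.mul_sum]
  congr 1
  apply Finset.sum_congr rfl
  intro j _
  ring

include hzfeas hzmin in
theorem VI (u z : Fin (n - 1) → ℝ) (hz : ∀ i, |z i| ≤ lam2) :
    0 ≤ dot (z - zfun u) ((B * Bᵀ).mulVec (zfun u) - u) := by
  set z0 := zfun u with hz0
  set d : Fin (n-1) → ℝ := z - z0 with hd
  set a : Fin n → ℝ := Bᵀ.mulVec z0 with ha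
  set b : Fin n → ℝ := Bᵀ.mulVec d with hb
  have key : ∀ t : ℝ, 0 < t → t ≤ 1 →
      0 ≤ t * (dot d ((B * Bᵀ).mulVec z0 - u)) + t^2 * ((1/2) * ∑ l, (b l)^2) := by
    intro t ht0 ht1
    set zt : Fin (n-1) → ℝ := fun j => z0 j + t * d j with hzt
    have hfeas : ∀ i, |zt i| ≤ lam2 := by
      intro i
      have h1 : |z0 i| ≤ lam2 := hzfeas u i
      have h2 : |z i| ≤ lam2 := hz i
      have : zt i = (1 - t) * z0 i + t * z i := by simp [hzt, hd]; ring
      rw [this]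
      calc |(1 - t) * z0 i + t * z i| ≤ |(1-t) * z0 i| + |t * z i| := abs_add_le _ _
        _ = (1-t) * |z0 i| + t * |z i| := by
            rw [abs_mul, abs_mul, abs_of_nonneg (by linarith), abs_of_nonneg ht0.le]
        _ ≤ (1-t) * lam2 + t * lam2 := by
            apply add_le_add
            · exact mul_le_mul_of_nonneg_left h1 (by linarith)
            · exact mul_le_mul_of_nonneg_left h2 ht0.le
        _ = lam2 := by ring
    have hmin := hzmin u zt hfeas
    have hbt : Bᵀ.mulVec zt = fun l => a l + t * b l := mulVec_affine Bᵀ z0 d t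
    have hlsq : (l2norm (Bᵀ.mulVec zt))^2 = ∑ l, (a l)^2 + t * (2 * ∑ l, a l * b l) + t^2 * ∑ l, (b l)^2 := by
      rw [l2sq, hbt]
      rw [Finset.mul_sum, Finset.mul_sum, Finset.mul_sum, ← Finset.sum_add_distrib, ← Finset.sum_add_distrib]
      apply Finset.sum_congr rfl
      intro l _
      ring
    have hdot : dot zt u = dot z0 u + t * dot d u := by
      simp only [dot, hzt, Finset.mul_sum, ← Finset.sum_add_distrib]
      apply Finset.sum_congr rfl
      intro j _
      ring
    have hadj : ∑ l, a l * b l = dot d ((B * Bᵀ).mulVec z0) := by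
      have h1 : dot d ((B * Bᵀ).mulVec z0) = d ⬝ᵥ (B.mulVec (Bᵀ.mulVec z0)) := by
        rw [dot_eq, Matrix.mulVec_mulVec]
      rw [h1, Matrix.dotProduct_mulVec, ← Matrix.mulVec_transpose]
      rw [← hb, ← ha]
      simp [dotProduct, mul_comm]
    have hdsub : dot d ((B * Bᵀ).mulVec z0 - u) = dot d ((B * Bᵀ).mulVec z0) - dot d u := by
      simp [dot, Pi.sub_apply, mul_sub, Finset.sum_sub_distrib]
    rw [← hz0] at hmin
    rw [hlsq, hdot, l2sq, ← ha] at hmin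
    rw [hdsub, ← hadj]
    nlinarith [hmin]
  exact lin_pos key

end


section
variable {n : ℕ} (lam2 : ℝ) (hlam2 : 0 ≤ lam2) (B : Matrix (Fin (n - 1)) (Fin n) ℝ)
  (zfun : (Fin (n - 1) → ℝ) → (Fin (n - 1) → ℝ))
  (hzfeas : ∀ u i, |zfun u i| ≤ lam2)

variable (hVI : ∀ (u z : Fin (n - 1) → ℝ), (∀ i, |z i| ≤ lam2) →
    0 ≤ dot (z - zfun u) ((B * Bᵀ).mulVec (zfun u) - u))

include hlam2 hzfeas hVI in
theorem VIc (u : Fin (n - 1) → ℝ) (i : Fin (n - 1)) (s : ℝ) (hs : |s| ≤ lam2) :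
    0 ≤ (s - zfun u i) * ((B * Bᵀ).mulVec (zfun u) - u) i := by
  have h := hVI u (Function.update (zfun u) i s) (by
    intro j
    by_cases hj : j = i
    · subst hj; simp [Function.update_self]; exact hs
    · rw [Function.update_of_ne hj]; exact hzfeas u j)
  rw [dot] at h
  rw [Finset.sum_eq_single i] at h
  · simpa using h
  · intro j _ hj
    simp [Function.update_of_ne hj]
  · intro hi; exact absurd (Finset.mem_univ i) hi

include hlam2 hzfeas hVI in
theorem slack (u : Fin (n - 1) → ℝ) (i : Fin (n - 1)) :
    zfun u i * (u - (B * Bᵀ).mulVec (zfun u)) i = lam2 * |(u - (B * Bᵀ).mulVec (zfun u)) i| := by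
  set r : ℝ := ((B * Bᵀ).mulVec (zfun u) - u) i with hr
  have hru : (u - (B * Bᵀ).mulVec (zfun u)) i = -r := by simp [hr]
  rw [hru]
  have h1 := VIc lam2 hlam2 B zfun hzfeas hVI u i lam2 (by rw [abs_of_nonneg hlam2])
  have h2 := VIc lam2 hlam2 B zfun hzfeas hVI u i (-lam2) (by rw [abs_neg, abs_of_nonneg hlam2])
  rw [← hr] at h1 h2
  have hz := hzfeas u i
  rw [abs_le] at hz
  rcases lt_trichotomy r 0 with hlt | heq | hgt
  · have hzl : zfun u i = lam2 := by nlinarith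
    rw [hzl, abs_of_pos (by linarith : (0:ℝ) < -r)]
  · rw [heq]; simp
  · have hzl : zfun u i = -lam2 := by nlinarith
    rw [hzl, abs_of_neg (by linarith : -r < 0)]
    ring

end


section
variable {n : ℕ} (lam2 : ℝ) (hlam2 : 0 ≤ lam2) (B : Matrix (Fin (n - 1)) (Fin n) ℝ)
  (zfun : (Fin (n - 1) → ℝ) → (Fin (n - 1) → ℝ))
  (hzfeas : ∀ u i, |zfun u i| ≤ lam2)
  (hslack : ∀ (u : Fin (n - 1) → ℝ) (i : Fin (n - 1)),
    zfun u i * (u - (B * Bᵀ).mulVec (zfun u)) i = lam2 * |(u - (B * Bᵀ).mulVec (zfun u)) i|)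
  (xfun : (Fin n → ℝ) → (Fin n → ℝ))
  (hxfun : ∀ (w : Fin n → ℝ) (x : Fin n → ℝ),
      lam2 * (∑ i, |B.mulVec (xfun w) i|) + (1/2) * (l2norm (xfun w - w))^2 ≤
      lam2 * (∑ i, |B.mulVec x i|) + (1/2) * (l2norm (x - w))^2)

-- the candidate minimizer is optimal, quantitatively
include hzfeas hslack in
theorem xhat_opt (u : Fin n → ℝ) (x : Fin n → ℝ) :
    lam2 * (∑ i, |B.mulVec (u - Bᵀ.mulVec (zfun (B.mulVec u))) i|) +
      (1/2) * (l2norm ((u - Bᵀ.mulVec (zfun (B.mulVec u))) - u))^2 +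
      (1/2) * (∑ l, (x l - (u - Bᵀ.mulVec (zfun (B.mulVec u))) l)^2) ≤
    lam2 * (∑ i, |B.mulVec x i|) + (1/2) * (l2norm (x - u))^2 := by
  set z : Fin (n-1) → ℝ := zfun (B.mulVec u) with hzdef
  set xh : Fin n → ℝ := u - Bᵀ.mulVec z with hxh
  -- B xh = Bu - (B Bᵀ) z
  have hBxh : B.mulVec xh = B.mulVec u - (B * Bᵀ).mulVec z := by
    rw [hxh, Matrix.mulVec_sub, Matrix.mulVec_mulVec]
  -- quadratic expansion: ‖x-u‖² = ‖xh-u‖² + 2⟨xh-u, x-xh⟩ + ‖x-xh‖²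
  have hquad : (l2norm (x - u))^2 =
      (l2norm (xh - u))^2 + 2 * dot (xh - u) (x - xh) + ∑ l, (x l - xh l)^2 := by
    rw [l2sq, l2sq, dot]
    rw [Finset.mul_sum, ← Finset.sum_add_distrib, ← Finset.sum_add_distrib]
    apply Finset.sum_congr rfl
    intro l _
    simp only [Pi.sub_apply]
    ring
  -- inner product term
  have hinner : dot (xh - u) (x - xh) = -(z ⬝ᵥ B.mulVec (x - xh)) := by
    have h1 : xh - u = -(Bᵀ.mulVec z) := by rw [hxh]; funext l; simp
    rw [dot_eq, h1]
    rw [neg_dotProduct]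
    congr 1
    rw [Matrix.dotProduct_mulVec, ← Matrix.mulVec_transpose]
  have hBsub : B.mulVec (x - xh) = B.mulVec x - B.mulVec xh := Matrix.mulVec_sub _ _ _
  -- pointwise: lam2 * |Bx i| ≥ z i * (Bx) i
  have hpt1 : ∀ i, z i * B.mulVec x i ≤ lam2 * |B.mulVec x i| := by
    intro i
    calc z i * B.mulVec x i ≤ |z i * B.mulVec x i| := le_abs_self _
      _ = |z i| * |B.mulVec x i| := abs_mul _ _
      _ ≤ lam2 * |B.mulVec x i| := mul_le_mul_of_nonneg_right (hzfeas _ i) (abs_nonneg _)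
  -- pointwise equality for xh
  have hpt2 : ∀ i, z i * B.mulVec xh i = lam2 * |B.mulVec xh i| := by
    intro i
    have := hslack (B.mulVec u) i
    rw [← hzdef] at this
    have heq : B.mulVec xh i = (B.mulVec u - (B * Bᵀ).mulVec z) i := by rw [hBxh]
    rw [heq]
    exact this
  -- assemble
  have hsum1 : z ⬝ᵥ B.mulVec x ≤ lam2 * ∑ i, |B.mulVec x i| := by
    rw [dotProduct, Finset.mul_sum]
    exact Finset.sum_le_sum fun i _ => hpt1 i
  have hsum2 : z ⬝ᵥ B.mulVec xh = lam2 * ∑ i, |B.mulVec xh i| := by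
    rw [dotProduct, Finset.mul_sum]
    exact Finset.sum_congr rfl fun i _ => hpt2 i
  have hdots : z ⬝ᵥ B.mulVec (x - xh) = z ⬝ᵥ B.mulVec x - z ⬝ᵥ B.mulVec xh := by
    rw [hBsub, dotProduct_sub]
  nlinarith [hquad, hinner, hdots, hsum1, hsum2]

include hzfeas hslack hxfun in
theorem xid (u : Fin n → ℝ) : xfun u = u - Bᵀ.mulVec (zfun (B.mulVec u)) := by
  set xh : Fin n → ℝ := u - Bᵀ.mulVec (zfun (B.mulVec u)) with hxh
  have h1 := xhat_opt lam2 B zfun hzfeas hslack u (xfun u)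
  have h2 := hxfun u xh
  rw [← hxh] at h1
  have hsq : ∑ l, (xfun u l - xh l)^2 ≤ 0 := by linarith
  have hz : ∀ l, (xfun u l - xh l)^2 = 0 := by
    intro l
    have hnn : ∀ l ∈ Finset.univ, (0:ℝ) ≤ (xfun u l - xh l)^2 := fun l _ => sq_nonneg _
    have := (Finset.sum_eq_zero_iff_of_nonneg hnn).mp (le_antisymm hsq (Finset.sum_nonneg hnn))
    exact this l (Finset.mem_univ l)
  funext l
  have := hz l
  have : xfun u l - xh l = 0 := by
    have := sq_eq_zero_iff.mp this
    exact this
  linarith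

end


section
variable {n : ℕ} (hn : 2 ≤ n) (B : Matrix (Fin (n - 1)) (Fin n) ℝ)
  (hB : ∀ (i : Fin (n - 1)) (l : Fin n),
      B i l = if (l : ℕ) = (i : ℕ) then 1 else if (l : ℕ) = (i : ℕ) + 1 then -1 else 0)

include hn hB in
theorem inv_bound (y : Fin (n - 1) → ℝ) (i : Fin (n - 1)) :
    |y i| ≤ ∑ k : Fin n, |Bᵀ.mulVec y k| := by
  classical
  set g : ℕ → ℝ := fun k => if h : k < n then Bᵀ.mulVec y ⟨k, h⟩ else 0 with hg
  have gval : ∀ (k : ℕ) (hk : k < n), g k =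
      (if h : k < n - 1 then y ⟨k, h⟩ else 0) -
      (if h : 1 ≤ k then y ⟨k - 1, by omega⟩ else 0) := by
    intro k hk
    have hgk : g k = ∑ j : Fin (n-1), B j ⟨k, hk⟩ * y j := by
      rw [hg]
      simp only [dif_pos hk]
      rw [Matrix.mulVec]
      simp [dotProduct, Matrix.transpose_apply]
    rw [hgk]
    have hsummand : ∀ j : Fin (n-1), B j ⟨k, hk⟩ * y j =
        (if h : k < n - 1 then (if j = (⟨k, h⟩ : Fin (n-1)) then y j else 0) else 0) +
        (if h : 1 ≤ k then (if j = (⟨k - 1, by omega⟩ : Fin (n-1)) then -(y j) else 0) else 0) := by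
      intro j
      have hj2 := j.2
      rw [hB]
      by_cases h1 : k = (j : ℕ)
      · rw [if_pos h1, dif_pos (show k < n - 1 by omega)]
        rw [if_pos (Fin.ext (show (j : ℕ) = k by omega))]
        by_cases hk2 : 1 ≤ k
        · rw [dif_pos hk2,
            if_neg (show ¬ j = ⟨k - 1, by omega⟩ from fun hc => by
              have hv : (j : ℕ) = k - 1 := congrArg Fin.val hc
              omega)]
          ring
        · rw [dif_neg hk2]; ring
      · rw [if_neg h1]
        by_cases h2 : k = (j : ℕ) + 1
        · rw [if_pos h2, dif_pos (show 1 ≤ k by omega)]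
          rw [if_pos (Fin.ext (show (j : ℕ) = k - 1 by omega))]
          by_cases hk1 : k < n - 1
          · rw [dif_pos hk1,
              if_neg (show ¬ j = ⟨k, hk1⟩ from fun hc => by
                have hv : (j : ℕ) = k := congrArg Fin.val hc
                omega)]
            ring
          · rw [dif_neg hk1]; ring
        · rw [if_neg h2]
          have e1 : (if h : k < n - 1 then (if j = (⟨k, h⟩ : Fin (n-1)) then y j else 0) else 0) = 0 := by
            by_cases hk1 : k < n - 1
            · rw [dif_pos hk1, if_neg (show ¬ j = ⟨k, hk1⟩ from fun hc => by
                have hv : (j : ℕ) = k := congrArg Fin.val hc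
                omega)]
            · rw [dif_neg hk1]
          have e2 : (if h : 1 ≤ k then (if j = (⟨k - 1, by omega⟩ : Fin (n-1)) then -(y j) else 0) else 0) = 0 := by
            by_cases hk2 : 1 ≤ k
            · rw [dif_pos hk2, if_neg (show ¬ j = ⟨k - 1, by omega⟩ from fun hc => by
                have hv : (j : ℕ) = k - 1 := congrArg Fin.val hc
                omega)]
            · rw [dif_neg hk2]
          rw [e1, e2]
          ring
    rw [Finset.sum_congr rfl (fun j _ => hsummand j), Finset.sum_add_distrib]
    have hsum1 : ∑ j : Fin (n-1),
        (if h : k < n - 1 then (if j = (⟨k, h⟩ : Fin (n-1)) then y j else 0) else 0) =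
        (if h : k < n - 1 then y ⟨k, h⟩ else 0) := by
      by_cases hk1 : k < n - 1
      · simp only [dif_pos hk1]
        rw [Finset.sum_ite_eq' Finset.univ]
        simp
      · simp only [dif_neg hk1, Finset.sum_const_zero]
    have hsum2 : ∑ j : Fin (n-1),
        (if h : 1 ≤ k then (if j = (⟨k - 1, by omega⟩ : Fin (n-1)) then -(y j) else 0) else 0) =
        (if h : 1 ≤ k then -(y ⟨k - 1, by omega⟩) else 0) := by
      by_cases hk2 : 1 ≤ k
      · simp only [dif_pos hk2]
        rw [Finset.sum_ite_eq' Finset.univ]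
        simp
      · simp only [dif_neg hk2, Finset.sum_const_zero]
    rw [hsum1, hsum2]
    by_cases hk2 : 1 ≤ k
    · rw [dif_pos hk2, dif_pos hk2]; ring
    · rw [dif_neg hk2, dif_neg hk2]; ring
  -- telescoping
  have tel : ∀ (m : ℕ) (hm : m < n - 1), y ⟨m, hm⟩ = ∑ k ∈ Finset.range (m+1), g k := by
    intro m
    induction m with
    | zero =>
      intro hm
      rw [Finset.sum_range_one, gval 0 (by omega)]
      rw [dif_pos hm, dif_neg (by omega : ¬ 1 ≤ 0)]
      ring
    | succ m ih =>
      intro hm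
      rw [Finset.sum_range_succ, ← ih (by omega), gval (m+1) (by omega)]
      rw [dif_pos hm, dif_pos (by omega : 1 ≤ m + 1)]
      have he : (⟨m + 1 - 1, by omega⟩ : Fin (n-1)) = ⟨m, by omega⟩ := Fin.ext (show m + 1 - 1 = m by omega)
      rw [he]
      ring
  have h1 : |y i| ≤ ∑ k ∈ Finset.range ((i : ℕ) + 1), |g k| := by
    have hyi : y i = ∑ k ∈ Finset.range ((i : ℕ)+1), g k := by
      have := tel (i : ℕ) i.2
      simpa using this
    rw [hyi]
    exact Finset.abs_sum_le_sum_abs _ _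
  have h2 : ∑ k ∈ Finset.range ((i : ℕ) + 1), |g k| ≤ ∑ k ∈ Finset.range n, |g k| := by
    apply Finset.sum_le_sum_of_subset_of_nonneg
    · apply Finset.range_subset_range.mpr; have := i.2; omega
    · intro k _ _; exact abs_nonneg _
  have h3 : ∑ k ∈ Finset.range n, |g k| = ∑ k : Fin n, |Bᵀ.mulVec y k| := by
    rw [← Fin.sum_univ_eq_sum_range (fun k => |g k|) n]
    apply Finset.sum_congr rfl
    intro k _
    rw [hg]
    simp only [dif_pos k.2]
  linarith

end


lemma dot_sub_left {m : ℕ} (u v w : Fin m → ℝ) : dot (u - v) w = dot u w - dot v w := by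
  simp [dot, Pi.sub_apply, sub_mul, Finset.sum_sub_distrib]
lemma dot_sub_right {m : ℕ} (u v w : Fin m → ℝ) : dot u (v - w) = dot u v - dot u w := by
  simp [dot, Pi.sub_apply, mul_sub, Finset.sum_sub_distrib]
section
variable {n : ℕ} (hn : 2 ≤ n) (lam2 : ℝ) (B : Matrix (Fin (n - 1)) (Fin n) ℝ)
  (hB : ∀ (i : Fin (n - 1)) (l : Fin n),
      B i l = if (l : ℕ) = (i : ℕ) then 1 else if (l : ℕ) = (i : ℕ) + 1 then -1 else 0)
  (zfun : (Fin (n - 1) → ℝ) → (Fin (n - 1) → ℝ))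
  (hzfeas : ∀ u i, |zfun u i| ≤ lam2)
  (hVI : ∀ (u z : Fin (n - 1) → ℝ), (∀ i, |z i| ≤ lam2) →
    0 ≤ dot (z - zfun u) ((B * Bᵀ).mulVec (zfun u) - u))
  (hinv : ∀ (y : Fin (n - 1) → ℝ) (i : Fin (n - 1)), |y i| ≤ ∑ k : Fin n, |Bᵀ.mulVec y k|)

lemma dsq (x : Fin (n-1) → ℝ) : dot x ((B * Bᵀ).mulVec x) = ∑ l, (Bᵀ.mulVec x l)^2 := by
  rw [dot_eq, ← Matrix.mulVec_mulVec, Matrix.dotProduct_mulVec, ← Matrix.mulVec_transpose]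
  rw [dotProduct]
  exact Finset.sum_congr rfl fun l _ => (sq (Bᵀ.mulVec x l)).symm

include hzfeas hVI in
lemma stab (w v' : Fin n → ℝ) :
    dot (zfun (B.mulVec w) - zfun (B.mulVec v')) ((B * Bᵀ).mulVec (zfun (B.mulVec w) - zfun (B.mulVec v'))) ≤
    dot (zfun (B.mulVec w) - zfun (B.mulVec v')) (B.mulVec (w - v')) := by
  set u1 := B.mulVec w
  set u2 := B.mulVec v'
  have h1 := hVI u1 (zfun u2) (hzfeas u2)
  have h2 := hVI u2 (zfun u1) (hzfeas u1)
  have hq : (B * Bᵀ).mulVec (zfun u1 - zfun u2) = (B * Bᵀ).mulVec (zfun u1) - (B * Bᵀ).mulVec (zfun u2) :=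
    Matrix.mulVec_sub _ _ _
  have hu : B.mulVec (w - v') = u1 - u2 := Matrix.mulVec_sub _ _ _
  rw [hq, hu]
  simp only [dot_sub_left, dot_sub_right] at h1 h2 ⊢
  linarith

-- entrywise bounds
include hB in
lemma B_abs_le (i : Fin (n-1)) (l : Fin n) : |B i l| ≤ 1 := by
  rw [hB]; split_ifs <;> norm_num

include hB in
lemma Brow_bound (x : Fin n → ℝ) (i : Fin (n-1)) : |B.mulVec x i| ≤ ∑ l, |x l| := by
  rw [Matrix.mulVec, dotProduct]
  calc |∑ l, B i l * x l| ≤ ∑ l, |B i l * x l| := Finset.abs_sum_le_sum_abs _ _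
    _ ≤ ∑ l, |x l| := by
        apply Finset.sum_le_sum
        intro l _
        rw [abs_mul]
        calc |B i l| * |x l| ≤ 1 * |x l| :=
              mul_le_mul_of_nonneg_right (B_abs_le B hB i l) (abs_nonneg _)
          _ = |x l| := one_mul _

include hB in
lemma Qent_bound (i j : Fin (n-1)) : |(B * Bᵀ) i j| ≤ (n : ℝ) := by
  rw [Matrix.mul_apply]
  calc |∑ l, B i l * Bᵀ l j| ≤ ∑ l, |B i l * Bᵀ l j| := Finset.abs_sum_le_sum_abs _ _
    _ ≤ ∑ _l : Fin n, (1:ℝ) := by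
        apply Finset.sum_le_sum
        intro l _
        rw [abs_mul, Matrix.transpose_apply]
        calc |B i l| * |B j l| ≤ 1 * 1 := by
              apply mul_le_mul (B_abs_le B hB i l) (B_abs_le B hB j l) (abs_nonneg _) (by norm_num)
          _ = 1 := by norm_num
    _ = (n : ℝ) := by simp

include hn hB hzfeas hVI hinv in
theorem zb (w v' : Fin n → ℝ) (i : Fin (n-1)) :
    |zfun (B.mulVec w) i - zfun (B.mulVec v') i| ≤ (n:ℝ)^3 * l2norm (w - v') := by
  haveI : Nonempty (Fin (n-1)) := ⟨⟨0, by omega⟩⟩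
  set d : Fin (n-1) → ℝ := zfun (B.mulVec w) - zfun (B.mulVec v') with hd
  set L : ℝ := l2norm (w - v') with hL
  have hL0 : 0 ≤ L := l2_nonneg _
  have hn0 : (0:ℝ) < (n:ℝ) := by exact_mod_cast (by omega : 0 < n)
  obtain ⟨i0, -, hi0⟩ := Finset.exists_max_image Finset.univ (fun i => |d i|) Finset.univ_nonempty
  have hmax : ∀ j, |d j| ≤ |d i0| := fun j => hi0 j (Finset.mem_univ j)
  -- chain
  have c1 : |d i0|^2 ≤ (∑ k : Fin n, |Bᵀ.mulVec d k|)^2 := by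
    apply pow_le_pow_left₀ (abs_nonneg _) (hinv d i0)
  have c2 : (∑ k : Fin n, |Bᵀ.mulVec d k|)^2 ≤ (n:ℝ) * ∑ k : Fin n, (Bᵀ.mulVec d k)^2 := by
    have := sq_sum_le_card_mul_sum_sq (s := (Finset.univ : Finset (Fin n))) (f := fun k => |Bᵀ.mulVec d k|)
    simp only [Finset.card_univ, Fintype.card_fin, sq_abs] at this
    exact_mod_cast this
  have c3 : ∑ k : Fin n, (Bᵀ.mulVec d k)^2 ≤ dot d (B.mulVec (w - v')) := by
    rw [← dsq B]
    exact stab lam2 B zfun hzfeas hVI w v'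
  have c4 : dot d (B.mulVec (w - v')) ≤ (n:ℝ) * (|d i0| * ((n:ℝ) * L)) := by
    rw [dot]
    have hterm : ∀ j : Fin (n-1), d j * B.mulVec (w - v') j ≤ |d i0| * ((n:ℝ) * L) := by
      intro j
      have hBj : |B.mulVec (w - v') j| ≤ (n:ℝ) * L := by
        calc |B.mulVec (w - v') j| ≤ ∑ l, |(w - v') l| := Brow_bound B hB _ j
          _ ≤ ∑ _l : Fin n, L := Finset.sum_le_sum fun l _ => abs_le_l2norm _ l
          _ = (n:ℝ) * L := by simp [mul_comm]
      calc d j * B.mulVec (w - v') j ≤ |d j * B.mulVec (w - v') j| := le_abs_self _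
        _ = |d j| * |B.mulVec (w - v') j| := abs_mul _ _
        _ ≤ |d i0| * ((n:ℝ) * L) := mul_le_mul (hmax j) hBj (abs_nonneg _) (abs_nonneg _)
    calc ∑ j, d j * B.mulVec (w - v') j ≤ ∑ _j : Fin (n-1), |d i0| * ((n:ℝ) * L) :=
          Finset.sum_le_sum fun j _ => hterm j
      _ = ((n-1 : ℕ) : ℝ) * (|d i0| * ((n:ℝ) * L)) := by simp [Finset.sum_const, Finset.card_univ]
      _ ≤ (n:ℝ) * (|d i0| * ((n:ℝ) * L)) := by
          apply mul_le_mul_of_nonneg_right _ (by positivity)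
          exact Nat.cast_le.mpr (Nat.sub_le n 1)
  have key : |d i0|^2 ≤ |d i0| * ((n:ℝ)^3 * L) := by
    calc |d i0|^2 ≤ (∑ k : Fin n, |Bᵀ.mulVec d k|)^2 := c1
      _ ≤ (n:ℝ) * ∑ k : Fin n, (Bᵀ.mulVec d k)^2 := c2
      _ ≤ (n:ℝ) * dot d (B.mulVec (w - v')) := by
          apply mul_le_mul_of_nonneg_left c3 hn0.le
      _ ≤ (n:ℝ) * ((n:ℝ) * (|d i0| * ((n:ℝ) * L))) := mul_le_mul_of_nonneg_left c4 hn0.le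
      _ = |d i0| * ((n:ℝ)^3 * L) := by ring
  have hfin : |d i0| ≤ (n:ℝ)^3 * L := by
    rcases eq_or_lt_of_le (abs_nonneg (d i0)) with h0 | h0
    · rw [← h0]; positivity
    · have := key
      rw [sq] at this
      exact le_of_mul_le_mul_left this h0
  show |d i| ≤ (n:ℝ)^3 * L
  calc |d i| ≤ |d i0| := hmax i
    _ ≤ (n:ℝ)^3 * L := hfin

end


section
variable {n : ℕ} (hn : 2 ≤ n) (lam2 : ℝ) (B : Matrix (Fin (n - 1)) (Fin n) ℝ)
  (zfun : (Fin (n - 1) → ℝ) → (Fin (n - 1) → ℝ))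
  (xfun : (Fin n → ℝ) → (Fin n → ℝ))
  (hxid : ∀ u, xfun u = u - Bᵀ.mulVec (zfun (B.mulVec u)))
  (hzb : ∀ (w v' : Fin n → ℝ) (i : Fin (n-1)),
    |zfun (B.mulVec w) i - zfun (B.mulVec v') i| ≤ (n:ℝ)^3 * l2norm (w - v'))
  (hQent : ∀ i j : Fin (n-1), |(B * Bᵀ) i j| ≤ (n : ℝ))
  (hBrow : ∀ (x : Fin n → ℝ) (i : Fin (n-1)), |B.mulVec x i| ≤ ∑ l, |x l|)
  (habsl2 : ∀ {m : ℕ} (v : Fin m → ℝ) (i : Fin m), |v i| ≤ l2norm v)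

include hxid hzb hQent hBrow habsl2 in
theorem xb (w v' : Fin n → ℝ) (i : Fin (n-1)) :
    |B.mulVec (xfun w) i - B.mulVec (xfun v') i| ≤ ((n:ℝ) + (n:ℝ)^5) * l2norm (w - v') := by
  set L : ℝ := l2norm (w - v') with hL
  have hL0 : 0 ≤ L := Real.sqrt_nonneg _
  set dz : Fin (n-1) → ℝ := zfun (B.mulVec w) - zfun (B.mulVec v') with hdz
  have hident : B.mulVec (xfun w) i - B.mulVec (xfun v') i =
      B.mulVec (w - v') i - (B * Bᵀ).mulVec dz i := by
    rw [hxid w, hxid v']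
    rw [hdz]
    simp only [Matrix.mulVec_sub, Matrix.mulVec_mulVec, Pi.sub_apply]
    ring
  rw [hident]
  have h1 : |B.mulVec (w - v') i| ≤ (n:ℝ) * L := by
    calc |B.mulVec (w - v') i| ≤ ∑ l, |(w - v') l| := hBrow _ i
      _ ≤ ∑ _l : Fin n, L := Finset.sum_le_sum fun l _ => habsl2 _ l
      _ = (n:ℝ) * L := by simp [mul_comm]
  have h2 : |(B * Bᵀ).mulVec dz i| ≤ (n:ℝ)^5 * L := by
    rw [Matrix.mulVec, dotProduct]
    have hterm : ∀ j : Fin (n-1), |(B * Bᵀ) i j * dz j| ≤ (n:ℝ) * ((n:ℝ)^3 * L) := by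
      intro j
      rw [abs_mul]
      have hdzj : |dz j| ≤ (n:ℝ)^3 * L := hzb w v' j
      apply mul_le_mul (hQent i j) hdzj (abs_nonneg _) (by positivity)
    calc |∑ j, (B * Bᵀ) i j * dz j| ≤ ∑ j, |(B * Bᵀ) i j * dz j| := Finset.abs_sum_le_sum_abs _ _
      _ ≤ ∑ _j : Fin (n-1), (n:ℝ) * ((n:ℝ)^3 * L) := Finset.sum_le_sum fun j _ => hterm j
      _ = ((n-1:ℕ):ℝ) * ((n:ℝ) * ((n:ℝ)^3 * L)) := by simp [Finset.sum_const, Finset.card_univ]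
      _ ≤ (n:ℝ) * ((n:ℝ) * ((n:ℝ)^3 * L)) := by
          apply mul_le_mul_of_nonneg_right (Nat.cast_le.mpr (Nat.sub_le n 1)) (by positivity)
      _ = (n:ℝ)^5 * L := by ring
  calc |B.mulVec (w - v') i - (B * Bᵀ).mulVec dz i| ≤
        |B.mulVec (w - v') i| + |(B * Bᵀ).mulVec dz i| := abs_sub _ _
    _ ≤ (n:ℝ) * L + (n:ℝ)^5 * L := add_le_add h1 h2
    _ = ((n:ℝ) + (n:ℝ)^5) * L := by ring

-- surjectivity of M := Σ (B Bᵀ) Σ onto vectors vanishing on K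
include hn in
theorem Msurj
    (hdsq : ∀ x : Fin (n-1) → ℝ, dot x ((B * Bᵀ).mulVec x) = ∑ l, (Bᵀ.mulVec x l)^2)
    (hinv : ∀ (y : Fin (n - 1) → ℝ) (i : Fin (n - 1)), |y i| ≤ ∑ k : Fin n, |Bᵀ.mulVec y k|)
    (K : Finset (Fin (n-1))) (dz : Fin (n-1) → ℝ) (hdzK : ∀ i ∈ K, dz i = 0) :
    ∃ y, (Matrix.diagonal (fun i => if i ∈ K then (0:ℝ) else 1) * (B * Bᵀ) *
      Matrix.diagonal (fun i => if i ∈ K then (0:ℝ) else 1)).mulVec y = dz := by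
  classical
  set σ : Fin (n-1) → ℝ := fun i => if i ∈ K then (0:ℝ) else 1 with hσ
  set S : Matrix (Fin (n-1)) (Fin (n-1)) ℝ := Matrix.diagonal σ with hS
  set M : Matrix (Fin (n-1)) (Fin (n-1)) ℝ := S * (B * Bᵀ) * S with hM
  have hMx : ∀ x, M.mulVec x = S.mulVec ((B * Bᵀ).mulVec (S.mulVec x)) := by
    intro x
    rw [hM, ← Matrix.mulVec_mulVec, ← Matrix.mulVec_mulVec]
  have hSapp : ∀ (x : Fin (n-1) → ℝ) (i : Fin (n-1)), S.mulVec x i = σ i * x i := by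
    intro x i
    rw [hS, Matrix.mulVec_diagonal]
  let V : Submodule ℝ (Fin (n-1) → ℝ) :=
    { carrier := {x | ∀ i ∈ K, x i = 0}
      add_mem' := fun ha hb i hi => by
        simp only [Pi.add_apply]
        rw [ha i hi, hb i hi, add_zero]
      zero_mem' := fun i hi => rfl
      smul_mem' := fun c x hx i hi => by
        simp only [Pi.smul_apply, smul_eq_mul]
        rw [hx i hi, mul_zero] }
  have hmemV : ∀ x : Fin (n-1) → ℝ, x ∈ V ↔ ∀ i ∈ K, x i = 0 := fun x => Iff.rfl
  have hSV : ∀ x ∈ V, S.mulVec x = x := by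
    intro x hx
    funext i
    rw [hSapp]
    by_cases hi : i ∈ K
    · rw [(hmemV x).mp hx i hi, mul_zero]
    · rw [hσ]; simp [hi]
  have hmap : ∀ x ∈ V, M.mulVecLin x ∈ V := by
    intro x _
    rw [hmemV]
    intro i hi
    rw [Matrix.mulVecLin_apply, hMx, hSapp]
    rw [hσ]
    simp [hi]
  have hdotS : ∀ x y : Fin (n-1) → ℝ, dot x (S.mulVec y) = dot (S.mulVec x) y := by
    intro x y
    rw [dot, dot]
    apply Finset.sum_congr rfl
    intro i _
    rw [hSapp, hSapp]
    ring
  have hinj : ∀ x ∈ V, M.mulVecLin x = 0 → x = 0 := by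
    intro x hx h0
    have hdx : dot x (M.mulVec x) = 0 := by
      rw [show M.mulVec x = M.mulVecLin x from rfl, h0]
      simp [dot]
    rw [hMx, hdotS, hSV x hx, hdsq] at hdx
    have hzero : ∀ l, Bᵀ.mulVec x l = 0 := by
      intro l
      have hnn : ∀ l ∈ Finset.univ, (0:ℝ) ≤ (Bᵀ.mulVec x l)^2 := fun l _ => sq_nonneg _
      have := (Finset.sum_eq_zero_iff_of_nonneg hnn).mp hdx l (Finset.mem_univ l)
      exact pow_eq_zero_iff (by norm_num) |>.mp this
    funext i
    have := hinv x i
    simp only [hzero, abs_zero, Finset.sum_const_zero] at this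
    exact abs_nonpos_iff.mp this
  -- restrict to V
  let T' : V →ₗ[ℝ] V := (M.mulVecLin).restrict hmap
  have hT'inj : Function.Injective T' := by
    rw [← LinearMap.ker_eq_bot]
    apply LinearMap.ker_eq_bot'.mpr
    intro m hm
    apply Subtype.ext
    apply hinj m.val m.2
    have := congrArg Subtype.val hm
    rw [LinearMap.restrict_apply] at this
    exact this
  have hT'surj : Function.Surjective T' := LinearMap.injective_iff_surjective.mp hT'inj
  obtain ⟨y, hy⟩ := hT'surj ⟨dz, hdzK⟩
  refine ⟨y.val, ?_⟩
  have := congrArg Subtype.val hy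
  rw [LinearMap.restrict_apply] at this
  exact this

end


section
variable {k : ℕ} (S Q M G : Matrix (Fin k) (Fin k) ℝ)
  (hM : M = S * Q * S) (hSsym : Sᵀ = S) (hQsym : Qᵀ = Q) (hSS : S * S = S)
  (g1 : M * G * M = M) (g2 : G * M * G = G) (g3 : (M * G)ᵀ = M * G) (g4 : (G * M)ᵀ = G * M)

include hM hSsym hQsym in
lemma hMsym : Mᵀ = M := by
  rw [hM, Matrix.transpose_mul, Matrix.transpose_mul, hSsym, hQsym, Matrix.mul_assoc]

include hM hSsym hQsym g2 g3 in
lemma hGGM : G = G * Gᵀ * M := by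
  calc G = G * M * G := g2.symm
    _ = G * (M * G) := by rw [Matrix.mul_assoc]
    _ = G * (M * G)ᵀ := by rw [g3]
    _ = G * (Gᵀ * Mᵀ) := by rw [Matrix.transpose_mul]
    _ = G * Gᵀ * M := by rw [hMsym S Q M hM hSsym hQsym, Matrix.mul_assoc]

include hM hSsym hQsym hSS g2 g3 in
lemma hGS : G * S = G := by
  have hMS : M * S = M := by rw [hM, Matrix.mul_assoc (S*Q) S S, hSS]
  calc G * S = (G * Gᵀ * M) * S := by rw [← hGGM S Q M G hM hSsym hQsym g2 g3]
    _ = G * Gᵀ * (M * S) := by rw [Matrix.mul_assoc]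
    _ = G * Gᵀ * M := by rw [hMS]
    _ = G := (hGGM S Q M G hM hSsym hQsym g2 g3).symm

include hM hSsym hQsym g1 g4 in
lemma hGMM : G * M * M = M := by
  have hMsym' : Mᵀ = M := hMsym S Q M hM hSsym hQsym
  have hGM : G * M = M * Gᵀ := by rw [← g4, Matrix.transpose_mul, hMsym']
  calc G * M * M = M * Gᵀ * M := by rw [hGM]
    _ = (Mᵀ * G * Mᵀ)ᵀ := by
        rw [Matrix.transpose_mul, Matrix.transpose_mul, Matrix.transpose_transpose,
          Matrix.mul_assoc]
    _ = (M * G * M)ᵀ := by rw [hMsym']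
    _ = Mᵀ := by rw [g1]
    _ = M := hMsym'

end



/-- **Proposition 5 (first-order sensitivity of `z_{λ₂}` and `x_{λ₂}`).** -/
theorem tv_prox_sensitivity {n : ℕ} (hn : 2 ≤ n) (lam2 : ℝ) (hlam2 : 0 ≤ lam2)
    (B : Matrix (Fin (n - 1)) (Fin n) ℝ)
    (hB : ∀ (i : Fin (n - 1)) (l : Fin n),
      B i l = if (l : ℕ) = (i : ℕ) then 1 else if (l : ℕ) = (i : ℕ) + 1 then -1 else 0)
    -- `zfun u = z_{λ₂}(u)` is the minimizer of `(1/2)‖Bᵀz‖² − ⟨z,u⟩` over `{‖z‖_∞ ≤ λ₂}`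
    (zfun : (Fin (n - 1) → ℝ) → (Fin (n - 1) → ℝ))
    (hzfeas : ∀ u i, |zfun u i| ≤ lam2)
    (hzmin : ∀ (u : Fin (n - 1) → ℝ) (z : Fin (n - 1) → ℝ), (∀ i, |z i| ≤ lam2) →
      (1/2) * (l2norm (Bᵀ.mulVec (zfun u)))^2 - dot (zfun u) u ≤
      (1/2) * (l2norm (Bᵀ.mulVec z))^2 - dot z u)
    -- `xfun w = x_{λ₂}(w)` is the minimizer of `λ₂‖Bx‖₁ + (1/2)‖x − w‖²`
    (xfun : (Fin n → ℝ) → (Fin n → ℝ))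
    (hxfun : ∀ (w : Fin n → ℝ) (x : Fin n → ℝ),
      lam2 * (∑ i, |B.mulVec (xfun w) i|) + (1/2) * (l2norm (xfun w - w))^2 ≤
      lam2 * (∑ i, |B.mulVec x i|) + (1/2) * (l2norm (x - w))^2)
    (v : Fin n → ℝ) :
    ∃ ε > 0, ∀ w : Fin n → ℝ, l2norm (w - v) < ε →
      -- (i) inclusion of active sets and supports
      ((∀ i : Fin (n - 1), |zfun (B.mulVec w) i| = lam2 → |zfun (B.mulVec v) i| = lam2) ∧
       (∀ i : Fin (n - 1), B.mulVec (xfun v) i ≠ 0 → B.mulVec (xfun w) i ≠ 0)) ∧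
      -- (ii) exact first-order expansions for every admissible index set `K`
      (∀ K : Finset (Fin (n - 1)),
        (∀ i : Fin (n - 1), B.mulVec (xfun w) i ≠ 0 → i ∈ K) →
        (∀ i ∈ K, |zfun (B.mulVec w) i| = lam2) →
        ∀ G : Matrix (Fin (n - 1)) (Fin (n - 1)) ℝ,
          IsMoorePenrose
            (Matrix.diagonal (fun i => if i ∈ K then (0 : ℝ) else 1) * (B * Bᵀ) *
              Matrix.diagonal (fun i => if i ∈ K then (0 : ℝ) else 1)) G →
          zfun (B.mulVec w) = zfun (B.mulVec v) + G.mulVec (B.mulVec (w - v)) ∧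
          xfun w = xfun v +
            ((1 : Matrix (Fin n) (Fin n) ℝ) - Bᵀ * G * B).mulVec (w - v)) := by
  classical
  haveI hne1 : Nonempty (Fin (n-1)) := ⟨⟨0, by omega⟩⟩
  -- derived global facts
  have hVI : ∀ (u z : Fin (n - 1) → ℝ), (∀ i, |z i| ≤ lam2) →
      0 ≤ dot (z - zfun u) ((B * Bᵀ).mulVec (zfun u) - u) := VI lam2 B zfun hzfeas hzmin
  have hslack : ∀ (u : Fin (n - 1) → ℝ) (i : Fin (n - 1)),
      zfun u i * (u - (B * Bᵀ).mulVec (zfun u)) i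
      = lam2 * |(u - (B * Bᵀ).mulVec (zfun u)) i| := slack lam2 hlam2 B zfun hzfeas hVI
  have hxid : ∀ u, xfun u = u - Bᵀ.mulVec (zfun (B.mulVec u)) :=
    xid lam2 B zfun hzfeas hslack xfun hxfun
  have hinv : ∀ (y : Fin (n - 1) → ℝ) (i : Fin (n - 1)),
      |y i| ≤ ∑ k : Fin n, |Bᵀ.mulVec y k| := inv_bound hn B hB
  have hzb : ∀ (w v' : Fin n → ℝ) (i : Fin (n-1)),
      |zfun (B.mulVec w) i - zfun (B.mulVec v') i| ≤ (n:ℝ)^3 * l2norm (w - v') :=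
    zb hn lam2 B hB zfun hzfeas hVI hinv
  have hxb : ∀ (w v' : Fin n → ℝ) (i : Fin (n-1)),
      |B.mulVec (xfun w) i - B.mulVec (xfun v') i| ≤ ((n:ℝ) + (n:ℝ)^5) * l2norm (w - v') :=
    xb B zfun xfun hxid hzb (Qent_bound B hB) (Brow_bound B hB) @abs_le_l2norm
  have hnpos : (0:ℝ) < (n:ℝ) := by exact_mod_cast (by omega : 0 < n)
  have hC0 : (0:ℝ) < (n:ℝ)^3 := pow_pos hnpos 3
  have hD0 : (0:ℝ) < (n:ℝ) + (n:ℝ)^5 := by have := pow_pos hnpos 5; linarith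
  have hunine : (Finset.univ : Finset (Fin (n-1))).Nonempty := Finset.univ_nonempty
  set e1 : ℝ := Finset.univ.inf' hunine
    (fun i => if |zfun (B.mulVec v) i| = lam2 then 1 else (lam2 - |zfun (B.mulVec v) i|)/(n:ℝ)^3)
    with he1
  set e2 : ℝ := Finset.univ.inf' hunine
    (fun i => if B.mulVec (xfun v) i = 0 then 1 else |B.mulVec (xfun v) i|/((n:ℝ) + (n:ℝ)^5))
    with he2
  set e3 : ℝ := if lam2 = 0 then 1 else lam2/(n:ℝ)^3 with he3
  have he10 : 0 < e1 := by
    rw [he1, Finset.lt_inf'_iff]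
    intro i _
    by_cases h : |zfun (B.mulVec v) i| = lam2
    · rw [if_pos h]; norm_num
    · rw [if_neg h]
      have hlt : |zfun (B.mulVec v) i| < lam2 := lt_of_le_of_ne (hzfeas _ i) h
      exact div_pos (by linarith) hC0
  have he20 : 0 < e2 := by
    rw [he2, Finset.lt_inf'_iff]
    intro i _
    by_cases h : B.mulVec (xfun v) i = 0
    · rw [if_pos h]; norm_num
    · rw [if_neg h]
      exact div_pos (abs_pos.mpr h) hD0
  have he30 : 0 < e3 := by
    rw [he3]
    by_cases h : lam2 = 0
    · rw [if_pos h]; norm_num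
    · rw [if_neg h]
      exact div_pos (lt_of_le_of_ne hlam2 (Ne.symm h)) hC0
  refine ⟨min (min e1 e2) e3, lt_min (lt_min he10 he20) he30, ?_⟩
  intro w hw
  have hwe1 : l2norm (w - v) < e1 :=
    lt_of_lt_of_le hw (le_trans (min_le_left _ _) (min_le_left _ _))
  have hwe2 : l2norm (w - v) < e2 :=
    lt_of_lt_of_le hw (le_trans (min_le_left _ _) (min_le_right _ _))
  have hwe3 : l2norm (w - v) < e3 := lt_of_lt_of_le hw (min_le_right _ _)
  -- part (i)(a)
  have hia : ∀ i, |zfun (B.mulVec w) i| = lam2 → |zfun (B.mulVec v) i| = lam2 := by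
    intro i hi
    by_contra hne
    have hlt : |zfun (B.mulVec v) i| < lam2 := lt_of_le_of_ne (hzfeas _ i) hne
    have hle : e1 ≤ (lam2 - |zfun (B.mulVec v) i|)/(n:ℝ)^3 := by
      rw [he1]
      refine le_trans (Finset.inf'_le _ (Finset.mem_univ i)) ?_
      rw [if_neg hne]
    have h2 : (n:ℝ)^3 * l2norm (w - v) < lam2 - |zfun (B.mulVec v) i| := by
      have h := lt_of_lt_of_le hwe1 hle
      rw [lt_div_iff₀ hC0] at h
      linarith
    have h3 := hzb w v i
    have h4 : |zfun (B.mulVec w) i| - |zfun (B.mulVec v) i| ≤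
        |zfun (B.mulVec w) i - zfun (B.mulVec v) i| := abs_sub_abs_le_abs_sub _ _
    rw [hi] at h4
    linarith
  -- part (i)(b)
  have hib : ∀ i, B.mulVec (xfun v) i ≠ 0 → B.mulVec (xfun w) i ≠ 0 := by
    intro i hvne hw0
    have hle : e2 ≤ |B.mulVec (xfun v) i|/((n:ℝ) + (n:ℝ)^5) := by
      rw [he2]
      refine le_trans (Finset.inf'_le _ (Finset.mem_univ i)) ?_
      rw [if_neg hvne]
    have h2 : ((n:ℝ) + (n:ℝ)^5) * l2norm (w - v) < |B.mulVec (xfun v) i| := by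
      have h := lt_of_lt_of_le hwe2 hle
      rw [lt_div_iff₀ hD0] at h
      linarith
    have h3 := hxb w v i
    rw [hw0, zero_sub, abs_neg] at h3
    linarith
  refine ⟨⟨hia, hib⟩, ?_⟩
  -- part (ii)
  intro K hK1 hK2 G hG
  obtain ⟨g1, g2, g3, g4⟩ := hG
  set dz : Fin (n-1) → ℝ := zfun (B.mulVec w) - zfun (B.mulVec v) with hdz
  have hdzi : ∀ i, dz i = zfun (B.mulVec w) i - zfun (B.mulVec v) i := fun i => rfl
  have hdzK : ∀ i ∈ K, dz i = 0 := by
    intro i hi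
    have hwact : |zfun (B.mulVec w) i| = lam2 := hK2 i hi
    have hvact : |zfun (B.mulVec v) i| = lam2 := hia i hwact
    rw [hdzi]
    by_cases h0 : lam2 = 0
    · have h1 := hzfeas (B.mulVec w) i
      have h2 := hzfeas (B.mulVec v) i
      rw [h0] at h1 h2
      rw [abs_nonpos_iff.mp h1, abs_nonpos_iff.mp h2, sub_zero]
    · have hl2 : 0 < lam2 := lt_of_le_of_ne hlam2 (Ne.symm h0)
      have he3v : e3 = lam2 / (n:ℝ)^3 := by rw [he3, if_neg h0]
      have hdiff : |zfun (B.mulVec w) i - zfun (B.mulVec v) i| < lam2 := by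
        have h3 := hzb w v i
        rw [he3v] at hwe3
        rw [lt_div_iff₀ hC0] at hwe3
        linarith
      rcases (abs_eq hlam2).mp hwact with hw1 | hw1 <;>
        rcases (abs_eq hlam2).mp hvact with hv1 | hv1
      · rw [hw1, hv1, sub_self]
      · rw [hw1, hv1, sub_neg_eq_add] at hdiff
        rw [abs_of_pos (by linarith)] at hdiff
        linarith
      · rw [hw1, hv1] at hdiff
        rw [show -lam2 - lam2 = -(2*lam2) by ring, abs_neg, abs_of_pos (by linarith)] at hdiff
        linarith
      · rw [hw1, hv1, sub_self]
  -- residuals off K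
  have hbxw_eq : B.mulVec (xfun w) = B.mulVec w - (B * Bᵀ).mulVec (zfun (B.mulVec w)) := by
    rw [hxid w, Matrix.mulVec_sub, Matrix.mulVec_mulVec]
  have hbxv_eq : B.mulVec (xfun v) = B.mulVec v - (B * Bᵀ).mulVec (zfun (B.mulVec v)) := by
    rw [hxid v, Matrix.mulVec_sub, Matrix.mulVec_mulVec]
  have hoffK : ∀ i ∉ K, (B * Bᵀ).mulVec dz i = B.mulVec (w - v) i := by
    intro i hi
    have hw0 : B.mulVec (xfun w) i = 0 := by
      by_contra hc; exact hi (hK1 i hc)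
    have hv0 : B.mulVec (xfun v) i = 0 := by
      by_contra hc; exact hi (hK1 i (hib i hc))
    rw [hbxw_eq] at hw0
    rw [hbxv_eq] at hv0
    simp only [Pi.sub_apply] at hw0 hv0
    rw [hdz, Matrix.mulVec_sub, Matrix.mulVec_sub]
    simp only [Pi.sub_apply]
    linarith
  -- surjectivity
  obtain ⟨y, hy⟩ := Msurj hn B (dsq B) hinv K dz hdzK
  -- abbreviations
  set σ : Fin (n-1) → ℝ := fun i => if i ∈ K then (0:ℝ) else 1 with hσ
  set S : Matrix (Fin (n-1)) (Fin (n-1)) ℝ := Matrix.diagonal σ with hSdef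
  set M : Matrix (Fin (n-1)) (Fin (n-1)) ℝ := S * (B * Bᵀ) * S with hMdef
  -- MP algebra
  have hSsym : Sᵀ = S := by rw [hSdef, Matrix.diagonal_transpose]
  have hQsym : (B * Bᵀ)ᵀ = B * Bᵀ := by
    rw [Matrix.transpose_mul, Matrix.transpose_transpose]
  have hSS : S * S = S := by
    have hσσ : (fun i => σ i * σ i) = σ := by
      funext i
      by_cases hi : i ∈ K <;> simp [hσ, hi]
    rw [hSdef, Matrix.diagonal_mul_diagonal, hσσ]
  have hGSm : G * S = G := hGS S (B * Bᵀ) M G hMdef hSsym hQsym hSS g2 g3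
  have hGMMm : G * M * M = M := hGMM S (B * Bᵀ) M G hMdef hSsym hQsym g1 g4
  -- M dz = S B (w - v)
  have hSdz : S.mulVec dz = dz := by
    funext i
    rw [hSdef, Matrix.mulVec_diagonal]
    by_cases hi : i ∈ K
    · rw [hdzK i hi, hσ]; simp [hi]
    · rw [hσ]; simp [hi]
  have hMdz : M.mulVec dz = S.mulVec (B.mulVec (w - v)) := by
    rw [hMdef, ← Matrix.mulVec_mulVec, ← Matrix.mulVec_mulVec, hSdz]
    funext i
    rw [hSdef, Matrix.mulVec_diagonal, Matrix.mulVec_diagonal, hσ]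
    by_cases hi : i ∈ K
    · simp [hi]
    · simp only [if_neg hi, one_mul]
      exact hoffK i hi
  -- the key identity
  have hdz_eq : dz = G.mulVec (B.mulVec (w - v)) := by
    have hc : G.mulVec (B.mulVec (w - v)) = dz := by
      have s1 : M.mulVec (M.mulVec y) = (M * M).mulVec y := Matrix.mulVec_mulVec _ _ _
      have s2 : G.mulVec ((M * M).mulVec y) = (G * (M * M)).mulVec y := Matrix.mulVec_mulVec _ _ _
      have s3 : G.mulVec (S.mulVec (B.mulVec (w - v))) = (G * S).mulVec (B.mulVec (w - v)) :=
        Matrix.mulVec_mulVec _ _ _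
      calc G.mulVec (B.mulVec (w - v))
          = (G * S).mulVec (B.mulVec (w - v)) := by rw [hGSm]
        _ = G.mulVec (S.mulVec (B.mulVec (w - v))) := s3.symm
        _ = G.mulVec (M.mulVec dz) := by rw [hMdz]
        _ = G.mulVec (M.mulVec (M.mulVec y)) := by rw [hy]
        _ = (G * (M * M)).mulVec y := by rw [s1, s2]
        _ = M.mulVec y := by rw [← Matrix.mul_assoc, hGMMm]
        _ = dz := hy
    exact hc.symm
  constructor
  · funext i
    have h1 := congrFun hdz_eq i
    rw [hdzi] at h1
    simp only [Pi.add_apply]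
    linarith
  · funext i
    have hxw := congrFun (hxid w) i
    have hxv := congrFun (hxid v) i
    simp only [Pi.sub_apply] at hxw hxv
    have hr : ((1 : Matrix (Fin n) (Fin n) ℝ) - Bᵀ * G * B).mulVec (w - v)
        = (w - v) - Bᵀ.mulVec (G.mulVec (B.mulVec (w - v))) := by
      rw [Matrix.sub_mulVec, Matrix.one_mulVec, ← Matrix.mulVec_mulVec, ← Matrix.mulVec_mulVec]
    have hri : ((1 : Matrix (Fin n) (Fin n) ℝ) - Bᵀ * G * B).mulVec (w - v) i
        = (w i - v i) - Bᵀ.mulVec dz i := by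
      rw [hr, ← hdz_eq]
      simp only [Pi.sub_apply]
    have hsplit : Bᵀ.mulVec dz i
        = Bᵀ.mulVec (zfun (B.mulVec w)) i - Bᵀ.mulVec (zfun (B.mulVec v)) i := by
      rw [hdz, Matrix.mulVec_sub]
      simp only [Pi.sub_apply]
    simp only [Pi.add_apply]
    rw [hri]
    linarith
end
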